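/- Let M be a triangulated category that is a module over a tensor triangulated category (K,⊗,1), and let c : SMod(M) → SMod(M) be an operator that is extensive, order-preserving and of finite type. Then for every N ∈ SMod^c(M), the function f : SMod^c(M) → SMod^c(M), N' ↦ c^∞(N + N'), is continuous. Consequently, the spectral space SMod^c(M) equipped with the operation (N, N') ↦ c^∞(N + N') is a topological monoid. -/

import Mathlib

open CategoryTheory CategoryTheory.Limits CategoryTheory.Pretriangulated
open CategoryTheory.MonoidalCategory ZeroObject

universe v u v' u'

/-- The data of the action of a tensor triangulated category `(K,⊗,1)` on a triangulated
category `M`, recorded on objects together with the unit and shift coherences that we use. -/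
structure TTModuleStr (K : Type u) [Category.{v} K] [MonoidalCategory K] [HasShift K ℤ]
    (M : Type u') [Category.{v'} M] [HasShift M ℤ] where
  act : K → M → M
  act_unit : ∀ m : M, Nonempty (act (𝟙_ K) m ≅ m)
  act_unit_shift : ∀ m : M, Nonempty (act ((𝟙_ K)⟦(1 : ℤ)⟧) m ≅ m⟦(1 : ℤ)⟧)
  act_unit_shift_neg : ∀ m : M, Nonempty (act ((𝟙_ K)⟦(-1 : ℤ)⟧) m ≅ m⟦(-1 : ℤ)⟧)

variable {K : Type u} [Category.{v} K] [MonoidalCategory K] [HasZeroObject K] [Preadditive K]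
  [HasShift K ℤ] [∀ n : ℤ, (shiftFunctor K n).Additive] [Pretriangulated K]
variable {M : Type u'} [Category.{v'} M] [HasZeroObject M] [Preadditive M] [HasShift M ℤ]
  [∀ n : ℤ, (shiftFunctor M n).Additive] [Pretriangulated M] [HasBinaryBiproducts M]

/-- A thick `K`-submodule of `M`. -/
structure ThickSubmodule (A : TTModuleStr K M) where
  carrier : Set M
  zero_mem : (0 : M) ∈ carrier
  act_mem : ∀ (a : K) (m : M), m ∈ carrier → A.act a m ∈ carrier
  biprod_mem_iff : ∀ m m' : M, (m ⊞ m') ∈ carrier ↔ (m ∈ carrier ∧ m' ∈ carrier)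
  mem₃_of_dist : ∀ T : Triangle M, T ∈ (distTriang M) →
    T.obj₁ ∈ carrier → T.obj₂ ∈ carrier → T.obj₃ ∈ carrier
  mem₁_of_dist : ∀ T : Triangle M, T ∈ (distTriang M) →
    T.obj₂ ∈ carrier → T.obj₃ ∈ carrier → T.obj₁ ∈ carrier
  mem₂_of_dist : ∀ T : Triangle M, T ∈ (distTriang M) →
    T.obj₁ ∈ carrier → T.obj₃ ∈ carrier → T.obj₂ ∈ carrier

variable (A : TTModuleStr K M)

instance : SetLike (ThickSubmodule A) M where
  coe N := N.carrier
  coe_injective := by intro N N' h; cases N; cases N'; congr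

/-- `U(m) = { N ∈ SMod(M) | m ∈ N }`. -/
def U (m : M) : Set (ThickSubmodule A) := {N : ThickSubmodule A | m ∈ N.carrier}

/-- The topology on `SMod(M)` generated by the subbasis `{U(m)}_{m ∈ M}`. -/
instance : TopologicalSpace (ThickSubmodule A) :=
  TopologicalSpace.generateFrom (Set.range (U A))

/-- The thick `K`-submodule of `M` generated by a set `X` of objects of `M`. -/
def genSub (X : Set M) : ThickSubmodule A where
  carrier := ⋂ (N : ThickSubmodule A) (_ : X ⊆ N.carrier), N.carrier
  zero_mem := by
    simp only [Set.mem_iInter]; intro N _; exact N.zero_mem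
  act_mem := by
    intro a m hm
    simp only [Set.mem_iInter] at hm ⊢
    intro N hN
    exact N.act_mem a m (hm N hN)
  biprod_mem_iff := by
    intro m m'
    simp only [Set.mem_iInter]
    constructor
    · intro h
      exact ⟨fun N hN => ((N.biprod_mem_iff m m').1 (h N hN)).1,
        fun N hN => ((N.biprod_mem_iff m m').1 (h N hN)).2⟩
    · rintro ⟨h1, h2⟩ N hN
      exact (N.biprod_mem_iff m m').2 ⟨h1 N hN, h2 N hN⟩
  mem₃_of_dist := by
    intro T hT h1 h2
    simp only [Set.mem_iInter] at h1 h2 ⊢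
    intro N hN
    exact N.mem₃_of_dist T hT (h1 N hN) (h2 N hN)
  mem₁_of_dist := by
    intro T hT h1 h2
    simp only [Set.mem_iInter] at h1 h2 ⊢
    intro N hN
    exact N.mem₁_of_dist T hT (h1 N hN) (h2 N hN)
  mem₂_of_dist := by
    intro T hT h1 h2
    simp only [Set.mem_iInter] at h1 h2 ⊢
    intro N hN
    exact N.mem₂_of_dist T hT (h1 N hN) (h2 N hN)

/-- The largest thick `K`-submodule: all of `M`. -/
def topSub : ThickSubmodule A where
  carrier := Set.univ
  zero_mem := trivial
  act_mem := fun _ _ _ => trivial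
  biprod_mem_iff := fun _ _ => by simp
  mem₃_of_dist := fun _ _ _ _ => trivial
  mem₁_of_dist := fun _ _ _ _ => trivial
  mem₂_of_dist := fun _ _ _ _ => trivial

/-- An operator on `SMod(M)` is extensive if `N ⊆ c(N)` for all `N`. -/
def Extensive (c : ThickSubmodule A → ThickSubmodule A) : Prop :=
  ∀ N : ThickSubmodule A, N.carrier ⊆ (c N).carrier

/-- An operator on `SMod(M)` is order-preserving if `N ⊆ N'` implies `c(N) ⊆ c(N')`. -/
def OrderPreserving (c : ThickSubmodule A → ThickSubmodule A) : Prop :=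
  ∀ N N' : ThickSubmodule A, N.carrier ⊆ N'.carrier → (c N).carrier ⊆ (c N').carrier

/-- An operator on `SMod(M)` is idempotent if `c(c(N)) = c(N)` for all `N`. -/
def Idempotent (c : ThickSubmodule A → ThickSubmodule A) : Prop :=
  ∀ N : ThickSubmodule A, c (c N) = c N

/-- An operator on `SMod(M)` is of finite type if `c(N) = ⋃_{n ∈ N} c(K(n))`. -/
def FiniteType (c : ThickSubmodule A → ThickSubmodule A) : Prop :=
  ∀ N : ThickSubmodule A,
    (c N).carrier = ⋃ n ∈ N.carrier, (c (genSub A {n})).carrier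

/-- A topological space is spectral if it is quasi-compact, `T0`, sober, and its
quasi-compact open subsets form a basis that is closed under finite intersections. -/
def IsSpectralSpace (X : Type*) [TopologicalSpace X] : Prop :=
  CompactSpace X ∧ T0Space X ∧ QuasiSober X ∧
    TopologicalSpace.IsTopologicalBasis {s : Set X | IsOpen s ∧ IsCompact s} ∧
    ∀ s t : Set X, IsOpen s → IsCompact s → IsOpen t → IsCompact t → IsCompact (s ∩ t)

/-!
Membership of an object `m` in `c^∞(N + N')` is always witnessed by finitely many objects
of `N'`: for `N + N'` because a thick closure only ever uses finitely many generators, for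
`c(-)` because `c` is of finite type, and for the directed union `c^∞`. So the preimage of
a subbasic open `U(m)` is a union of finite intersections of subbasic opens. For the monoid
laws, `c^∞(L)` is the least `c`-closed submodule containing `L`, whence
`c^∞(c^∞(L) + N) = c^∞(L + N)`; the unit is `c^∞(0)`.
-/

set_option linter.unusedSectionVars false

namespace ThickSubmodule

section Lattice

variable {A}

instance : PartialOrder (ThickSubmodule A) := .ofSetLike (ThickSubmodule A) M

theorem genSub_le_iff {X : Set M} {N : ThickSubmodule A} : genSub A X ≤ N ↔ X ⊆ N := by
  refine ⟨fun h x hx => h ?_, fun h m hm => ?_⟩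
  · simp only [genSub]
    exact Set.mem_iInter₂.2 fun N' hN' => hN' hx
  · exact Set.mem_iInter₂.1 hm N h

variable (A) in
theorem gc_genSub : GaloisConnection (genSub A) ((↑) : ThickSubmodule A → Set M) :=
  fun _ _ => genSub_le_iff

variable (A) in
def giGenSub : GaloisInsertion (genSub A) ((↑) : ThickSubmodule A → Set M) :=
  (gc_genSub A).toGaloisInsertion fun N => (gc_genSub A).le_u_l N

instance : CompleteLattice (ThickSubmodule A) := (giGenSub A).liftCompleteLattice

theorem subset_genSub (X : Set M) : X ⊆ genSub A X := (gc_genSub A).le_u_l X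

def iUnionOfDirected {ι : Type*} [Nonempty ι] (F : ι → ThickSubmodule A)
    (hF : Directed (· ≤ ·) F) : ThickSubmodule A :=
  have exists_common {m m' : M} (hm : m ∈ ⋃ i, (F i).carrier) (hm' : m' ∈ ⋃ i, (F i).carrier) :
      ∃ k, m ∈ F k ∧ m' ∈ F k := by
    obtain ⟨i, hi⟩ := Set.mem_iUnion.1 hm
    obtain ⟨j, hj⟩ := Set.mem_iUnion.1 hm'
    obtain ⟨k, hik, hjk⟩ := hF i j
    exact ⟨k, hik hi, hjk hj⟩
  { carrier := ⋃ i, (F i).carrier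
    zero_mem := Set.mem_iUnion.2 ⟨Classical.arbitrary ι, (F _).zero_mem⟩
    act_mem := fun a m hm => by
      obtain ⟨i, hi⟩ := Set.mem_iUnion.1 hm
      exact Set.mem_iUnion.2 ⟨i, (F i).act_mem a m hi⟩
    biprod_mem_iff := fun m m' => by
      refine ⟨fun h => ?_, fun ⟨h, h'⟩ => ?_⟩
      · obtain ⟨i, hi⟩ := Set.mem_iUnion.1 h
        obtain ⟨hm, hm'⟩ := ((F i).biprod_mem_iff m m').1 hi
        exact ⟨Set.mem_iUnion.2 ⟨i, hm⟩, Set.mem_iUnion.2 ⟨i, hm'⟩⟩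
      · obtain ⟨k, hk, hk'⟩ := exists_common h h'
        exact Set.mem_iUnion.2 ⟨k, ((F k).biprod_mem_iff m m').2 ⟨hk, hk'⟩⟩
    mem₃_of_dist := fun T hT h₁ h₂ => by
      obtain ⟨k, hk₁, hk₂⟩ := exists_common h₁ h₂
      exact Set.mem_iUnion.2 ⟨k, (F k).mem₃_of_dist T hT hk₁ hk₂⟩
    mem₁_of_dist := fun T hT h₂ h₃ => by
      obtain ⟨k, hk₂, hk₃⟩ := exists_common h₂ h₃
      exact Set.mem_iUnion.2 ⟨k, (F k).mem₁_of_dist T hT hk₂ hk₃⟩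
    mem₂_of_dist := fun T hT h₁ h₃ => by
      obtain ⟨k, hk₁, hk₃⟩ := exists_common h₁ h₃
      exact Set.mem_iUnion.2 ⟨k, (F k).mem₂_of_dist T hT hk₁ hk₃⟩ }

theorem coe_iSup_of_directed {ι : Type*} [Nonempty ι] {F : ι → ThickSubmodule A}
    (hF : Directed (· ≤ ·) F) : ((⨆ i, F i : ThickSubmodule A) : Set M) = ⋃ i, (F i : Set M) :=
  subset_antisymm (iSup_le (a := iUnionOfDirected F hF) fun i =>
    Set.subset_iUnion (fun j => (F j : Set M)) i)
    (Set.iUnion_subset fun i => SetLike.coe_subset_coe.2 (le_iSup F i))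

theorem mem_iSup_of_directed {ι : Type*} [Nonempty ι] {F : ι → ThickSubmodule A}
    (hF : Directed (· ≤ ·) F) {m : M} : m ∈ (⨆ i, F i : ThickSubmodule A) ↔ ∃ i, m ∈ F i := by
  rw [← SetLike.mem_coe, coe_iSup_of_directed hF, Set.mem_iUnion]
  rfl

theorem exists_finset_of_mem_genSub {X : Set M} {m : M} (hm : m ∈ genSub A X) :
    ∃ s : Finset M, ↑s ⊆ X ∧ m ∈ genSub A (s : Set M) := by
  classical
  let F : {s : Finset M // ↑s ⊆ X} → ThickSubmodule A := fun s => genSub A (s.1 : Set M)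
  have hF : Directed (· ≤ ·) F := fun s t =>
    ⟨⟨s.1 ∪ t.1, by simpa using Set.union_subset s.2 t.2⟩,
      (gc_genSub A).monotone_l (by simp), (gc_genSub A).monotone_l (by simp)⟩
  have : Nonempty {s : Finset M // ↑s ⊆ X} := ⟨⟨∅, by simp⟩⟩
  have hX : genSub A X ≤ ⨆ s, F s := genSub_le_iff.2 fun x hx =>
    le_iSup F ⟨{x}, by simpa using hx⟩ (subset_genSub _ (by simp))
  obtain ⟨s, hs⟩ := (mem_iSup_of_directed hF).1 (hX hm)
  exact ⟨s.1, s.2, hs⟩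

end Lattice

section Iterate

variable {A} {c : ThickSubmodule A → ThickSubmodule A}

theorem _root_.FiniteType.mem_iff (hft : FiniteType A c) {N : ThickSubmodule A} {m : M} :
    m ∈ c N ↔ ∃ n ∈ N, m ∈ c (genSub A {n}) := by
  change m ∈ (c N).carrier ↔ _
  rw [hft, Set.mem_iUnion₂]
  simp only [exists_prop]
  rfl

theorem _root_.FiniteType.monotone (hft : FiniteType A c) : Monotone c := fun _ _ h _ hm =>
  let ⟨n, hn, hmn⟩ := hft.mem_iff.1 hm
  hft.mem_iff.2 ⟨n, h hn, hmn⟩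

theorem _root_.Extensive.directed_iterate (hext : Extensive A c) (N : ThickSubmodule A) :
    Directed (· ≤ ·) fun i => c^[i] N :=
  Monotone.directed_le fun _ _ hij => Function.monotone_iterate_of_id_le (f := c) hext hij N

variable (c) in
def cInfty (N : ThickSubmodule A) : ThickSubmodule A := ⨆ i, c^[i] N

theorem mem_cInfty (hext : Extensive A c) {N : ThickSubmodule A} {m : M} :
    m ∈ cInfty c N ↔ ∃ i, m ∈ c^[i] N :=
  mem_iSup_of_directed (hext.directed_iterate N)

theorem coe_cInfty (hext : Extensive A c) (N : ThickSubmodule A) :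
    (cInfty c N : Set M) = ⋃ i, (c^[i] N : Set M) :=
  coe_iSup_of_directed (hext.directed_iterate N)

theorem iterate_le_cInfty (N : ThickSubmodule A) (i : ℕ) : c^[i] N ≤ cInfty c N :=
  le_iSup (fun i => c^[i] N) i

theorem le_cInfty (N : ThickSubmodule A) : N ≤ cInfty c N := iterate_le_cInfty N 0

theorem cInfty_le (hc : Monotone c) {N L : ThickSubmodule A} (hL : c L = L) (h : N ≤ L) :
    cInfty c N ≤ L :=
  iSup_le fun i => (hc.iterate i h).trans_eq (Function.iterate_fixed hL i)

theorem cInfty_mono (hc : Monotone c) : Monotone (cInfty c) := fun _ _ h =>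
  iSup_mono fun i => hc.iterate i h

theorem map_cInfty (hext : Extensive A c) (hft : FiniteType A c) (N : ThickSubmodule A) :
    c (cInfty c N) = cInfty c N := by
  refine le_antisymm (fun m hm => ?_) (hext _)
  obtain ⟨n, hn, hmn⟩ := hft.mem_iff.1 hm
  obtain ⟨i, hi⟩ := (mem_cInfty hext).1 hn
  have hn_le : genSub A {n} ≤ c^[i] N := genSub_le_iff.2 (Set.singleton_subset_iff.2 hi)
  refine iterate_le_cInfty N (i + 1) ?_
  rw [Function.iterate_succ_apply']
  exact hft.monotone hn_le hmn

theorem cInfty_eq_self (hc : Monotone c) {L : ThickSubmodule A} (hL : c L = L) :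
    cInfty c L = L :=
  le_antisymm (cInfty_le hc hL le_rfl) (le_cInfty L)

theorem cInfty_cInfty_sup (hext : Extensive A c) (hft : FiniteType A c)
    (L N : ThickSubmodule A) : cInfty c (cInfty c L ⊔ N) = cInfty c (L ⊔ N) :=
  le_antisymm
    (cInfty_le hft.monotone (map_cInfty hext hft _)
      (sup_le (cInfty_mono hft.monotone le_sup_left) (le_sup_right.trans (le_cInfty _))))
    (cInfty_mono hft.monotone (sup_le_sup_right (le_cInfty L) N))

theorem cInfty_sup_assoc (hext : Extensive A c) (hft : FiniteType A c)
    (N₁ N₂ N₃ : ThickSubmodule A) :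
    cInfty c (cInfty c (N₁ ⊔ N₂) ⊔ N₃) = cInfty c (N₁ ⊔ cInfty c (N₂ ⊔ N₃)) := by
  rw [cInfty_cInfty_sup hext hft, sup_comm N₁ (cInfty c _), cInfty_cInfty_sup hext hft,
    sup_assoc, sup_comm N₁]

theorem cInfty_cInfty_bot_sup (hext : Extensive A c) (hft : FiniteType A c)
    {N : ThickSubmodule A} (hN : c N = N) : cInfty c (cInfty c ⊥ ⊔ N) = N := by
  rw [cInfty_cInfty_sup hext hft, bot_sup_eq, cInfty_eq_self hft.monotone hN]

end Iterate

section Finitary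

variable {A}

def IsFinitary (F : ThickSubmodule A → ThickSubmodule A) : Prop :=
  ∀ ⦃m : M⦄ ⦃N' : ThickSubmodule A⦄, m ∈ F N' →
    ∃ s : Finset M, ↑s ⊆ (N' : Set M) ∧ ∀ N'' : ThickSubmodule A, ↑s ⊆ (N'' : Set M) → m ∈ F N''

theorem isFinitary_sup_left (N : ThickSubmodule A) : IsFinitary fun N' => N ⊔ N' := by
  classical
  intro m N' hm
  obtain ⟨s, hs, hms⟩ := exists_finset_of_mem_genSub hm
  refine ⟨s.filter (· ∈ N'), by simp [Set.subset_def], fun N'' hN'' => ?_⟩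
  have hs'' : (s : Set M) ⊆ N ∪ N'' := fun x hx =>
    (hs hx).imp id fun hx' => hN'' (by simpa using ⟨hx, hx'⟩)
  exact (gc_genSub A).monotone_l hs'' hms

variable {c : ThickSubmodule A → ThickSubmodule A} {F : ThickSubmodule A → ThickSubmodule A}

theorem IsFinitary.map (hft : FiniteType A c) (hF : IsFinitary F) :
    IsFinitary fun N' => c (F N') := by
  intro m N' hm
  obtain ⟨n, hn, hmn⟩ := hft.mem_iff.1 hm
  obtain ⟨s, hs, hsF⟩ := hF hn
  exact ⟨s, hs, fun N'' hN'' => hft.mem_iff.2 ⟨n, hsF N'' hN'', hmn⟩⟩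

theorem IsFinitary.iterate (hft : FiniteType A c) (hF : IsFinitary F) (i : ℕ) :
    IsFinitary fun N' => c^[i] (F N') := by
  induction i with
  | zero => exact hF
  | succ i ih => simpa only [Function.iterate_succ_apply'] using ih.map hft

theorem IsFinitary.cInfty (hext : Extensive A c) (hft : FiniteType A c) (hF : IsFinitary F) :
    IsFinitary fun N' => cInfty c (F N') := by
  intro m N' hm
  obtain ⟨i, hi⟩ := (mem_cInfty hext).1 hm
  obtain ⟨s, hs, hsF⟩ := hF.iterate hft i hi
  exact ⟨s, hs, fun N'' hN'' => iterate_le_cInfty _ i (hsF N'' hN'')⟩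

theorem IsFinitary.continuous (hF : IsFinitary F) : Continuous F := by
  refine continuous_generateFrom_iff.2 ?_
  rintro _ ⟨m, rfl⟩
  refine isOpen_iff_forall_mem_open.2 fun N' hN' => ?_
  obtain ⟨s, hs, hsF⟩ := hF hN'
  refine ⟨⋂ n ∈ s, U A n, fun N'' hN'' => hsF N'' fun n hn => Set.mem_iInter₂.1 hN'' n hn,
    isOpen_biInter_finset fun n _ => TopologicalSpace.isOpen_generateFrom_of_mem ⟨n, rfl⟩,
    Set.mem_iInter₂.2 fun n hn => hs hn⟩

end Finitary

end ThickSubmodule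

theorem statement17 (c : ThickSubmodule A → ThickSubmodule A)
    (hext : Extensive A c) (hft : FiniteType A c) :
    (∃ mul : {N : ThickSubmodule A // c N = N} → {N : ThickSubmodule A // c N = N} →
        {N : ThickSubmodule A // c N = N},
      ∀ N N' : {N : ThickSubmodule A // c N = N},
        ((mul N N').1).carrier =
          ⋃ i : ℕ, (c^[i] (genSub A (N.1.carrier ∪ N'.1.carrier))).carrier) ∧
    (∀ mul : {N : ThickSubmodule A // c N = N} → {N : ThickSubmodule A // c N = N} →
        {N : ThickSubmodule A // c N = N},
      (∀ N N' : {N : ThickSubmodule A // c N = N},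
        ((mul N N').1).carrier =
          ⋃ i : ℕ, (c^[i] (genSub A (N.1.carrier ∪ N'.1.carrier))).carrier) →
      (∀ N : {N : ThickSubmodule A // c N = N}, Continuous fun N' => mul N N') ∧
      (∀ N₁ N₂ N₃ : {N : ThickSubmodule A // c N = N},
        mul (mul N₁ N₂) N₃ = mul N₁ (mul N₂ N₃)) ∧
      (∃ e : {N : ThickSubmodule A // c N = N},
        ∀ N : {N : ThickSubmodule A // c N = N}, mul e N = N ∧ mul N e = N)) := by
  let mul (N N' : {N : ThickSubmodule A // c N = N}) : {N : ThickSubmodule A // c N = N} :=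
    ⟨ThickSubmodule.cInfty c (N.1 ⊔ N'.1), ThickSubmodule.map_cInfty hext hft _⟩
  have hmul : ∀ N N' : {N : ThickSubmodule A // c N = N}, ((mul N N').1).carrier =
      ⋃ i : ℕ, (c^[i] (genSub A (N.1.carrier ∪ N'.1.carrier))).carrier :=
    fun N N' => ThickSubmodule.coe_cInfty hext (N.1 ⊔ N'.1)
  refine ⟨⟨mul, hmul⟩, fun mul' hmul' => ?_⟩
  obtain rfl : mul' = mul := funext₂ fun N N' =>
    Subtype.ext (SetLike.coe_injective ((hmul' N N').trans (hmul N N').symm))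
  refine ⟨fun N => ?_,
    fun N₁ N₂ N₃ => Subtype.ext (ThickSubmodule.cInfty_sup_assoc hext hft _ _ _),
    ⟨ThickSubmodule.cInfty c ⊥, ThickSubmodule.map_cInfty hext hft ⊥⟩,
    fun N => ⟨Subtype.ext ?_, Subtype.ext ?_⟩⟩
  · exact (((ThickSubmodule.isFinitary_sup_left N.1).cInfty hext hft).continuous.comp
      continuous_subtype_val).subtype_mk _
  · exact ThickSubmodule.cInfty_cInfty_bot_sup hext hft N.2
  · exact (congrArg (ThickSubmodule.cInfty c) (sup_comm _ _)).trans
      (ThickSubmodule.cInfty_cInfty_bot_sup hext hft N.2)
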